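/- arXiv:1403.7877 — 2 statements merged into one kernel-verified Lean document; each statement's English description precedes it below -/
import Mathlib

section
/- (Theorem 1, equivalence of the IQP to an LSAP.) Let n ≤ n_k be positive integers, let F ∈ ℝ^{d × n_k} have columns f_1,…,f_{n_k} all of equal Euclidean norm c (‖f_i‖₂ = c for all i), let ρ > 0, and let b ∈ ℝ^{dn} be any vector. For a partial permutation matrix P ∈ ℝ^{n_k × n}, write vec(F P) ∈ ℝ^{dn} for the vectorization of F P. Then a partial permutation matrix P* minimizes the quadratic objective (ρ/2)‖vec(F P)‖₂² − bᵀ vec(F P) over all partial permutation matrices P of size n_k × n if and only if P* minimizes the linear objective −bᵀ vec(F P) over all partial permutation matrices P of size n_k × n. That is, the integer quadratic program is equivalent to a linear sum assignment problem. -/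
open Matrix BigOperators

/-- A partial permutation matrix: entries in {0,1}, each column sums to 1,
each row sums to at most 1. -/
def IsPPM {m n : ℕ} (P : Matrix (Fin m) (Fin n) ℝ) : Prop :=
  (∀ i j, P i j = 0 ∨ P i j = 1) ∧ (∀ j, ∑ i, P i j = 1) ∧ (∀ i, ∑ j, P i j ≤ 1)

lemma ppm_cross {nk n : ℕ} {P : Matrix (Fin nk) (Fin n) ℝ} (hP : IsPPM P)
    (j : Fin n) {i i' : Fin nk} (h : i ≠ i') : P i j * P i' j = 0 := by
  obtain ⟨h01, hcol, _⟩ := hP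
  rcases h01 i j with h1 | h1
  · simp [h1]
  rcases h01 i' j with h2 | h2
  · simp [h2]
  exfalso
  have hnn : ∀ k, 0 ≤ P k j := fun k => by rcases h01 k j with hh | hh <;> simp [hh]
  have h2le : (2 : ℝ) ≤ ∑ k, P k j := by
    have hpair : ({i, i'} : Finset (Fin nk)).sum (fun k => P k j) = 2 := by
      rw [Finset.sum_pair h, h1, h2]; norm_num
    calc (2 : ℝ) = _ := hpair.symm
      _ ≤ ∑ k, P k j :=
        Finset.sum_le_sum_of_subset_of_nonneg (Finset.subset_univ _)
          (fun k _ _ => hnn k)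
  linarith [hcol j]

lemma ppm_col_norm {d nk n : ℕ} {c : ℝ} (F : Matrix (Fin d) (Fin nk) ℝ)
    (hc2 : ∀ i : Fin nk, ∑ r, F r i ^ 2 = c ^ 2)
    {P : Matrix (Fin nk) (Fin n) ℝ} (hP : IsPPM P) (j : Fin n) :
    ∑ r, ((F * P) r j) ^ 2 = c ^ 2 := by
  have key : ∑ r, ((F * P) r j) ^ 2
      = ∑ i, ∑ i', (P i j * P i' j) * ∑ r, F r i * F r i' := by
    simp only [Matrix.mul_apply, sq, Finset.sum_mul_sum, Finset.mul_sum, Finset.sum_mul]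
    rw [Finset.sum_comm]
    refine Finset.sum_congr rfl fun i _ => ?_
    rw [Finset.sum_comm]
    exact Finset.sum_congr rfl fun i' _ => Finset.sum_congr rfl fun r _ => by ring
  rw [key]
  have hdiag : ∀ i : Fin nk,
      ∑ i', (P i j * P i' j) * ∑ r, F r i * F r i' = P i j * c ^ 2 := by
    intro i
    rw [Finset.sum_eq_single i]
    · have hFF : ∑ r, F r i * F r i = c ^ 2 := by
        rw [← hc2 i]
        exact Finset.sum_congr rfl fun r _ => (sq (F r i)).symm
      rcases hP.1 i j with h | h <;> simp [h, hFF]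
    · intro i' _ hne
      rw [ppm_cross hP j (Ne.symm hne), zero_mul]
    · intro h; exact absurd (Finset.mem_univ i) h
  simp only [hdiag]
  rw [← Finset.sum_mul, hP.2.1 j, one_mul]

lemma ppm_quad_const {d nk n : ℕ} {c : ℝ} (F : Matrix (Fin d) (Fin nk) ℝ)
    (hF : ∀ i : Fin nk, Real.sqrt (∑ r, F r i ^ 2) = c)
    {P : Matrix (Fin nk) (Fin n) ℝ} (hP : IsPPM P) :
    ∑ j, ∑ r, ((F * P) r j) ^ 2 = n * c ^ 2 := by
  have hc2 : ∀ i : Fin nk, ∑ r, F r i ^ 2 = c ^ 2 := by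
    intro i
    have hnn : 0 ≤ ∑ r, F r i ^ 2 := Finset.sum_nonneg fun r _ => sq_nonneg _
    rw [← hF i]
    exact (Real.sq_sqrt hnn).symm
  simp only [ppm_col_norm F hc2 hP]
  simp [Finset.sum_const, mul_comm]

/-- Theorem 1 (equivalence of the IQP to an LSAP): if all columns of `F` have equal
Euclidean norm, then a PPM `P*` minimizes the quadratic objective
`(ρ/2)‖vec(F P)‖₂² − bᵀ vec(F P)` over all PPMs iff it minimizes the linear
objective `−bᵀ vec(F P)` over all PPMs. -/
theorem iqp_equiv_lsap (d n nk : ℕ) (hn : 0 < n) (hle : n ≤ nk)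
    (c ρ : ℝ) (hρ : 0 < ρ)
    (F : Matrix (Fin d) (Fin nk) ℝ)
    (hF : ∀ i : Fin nk, Real.sqrt (∑ r, F r i ^ 2) = c)
    (b : Fin n → Fin d → ℝ)
    (Pstar : Matrix (Fin nk) (Fin n) ℝ) (hPstar : IsPPM Pstar) :
    (∀ P : Matrix (Fin nk) (Fin n) ℝ, IsPPM P →
        ρ / 2 * (∑ j, ∑ r, ((F * Pstar) r j) ^ 2)
            - ∑ j, ∑ r, b j r * (F * Pstar) r j
          ≤ ρ / 2 * (∑ j, ∑ r, ((F * P) r j) ^ 2)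
            - ∑ j, ∑ r, b j r * (F * P) r j) ↔
    (∀ P : Matrix (Fin nk) (Fin n) ℝ, IsPPM P →
        -(∑ j, ∑ r, b j r * (F * Pstar) r j)
          ≤ -(∑ j, ∑ r, b j r * (F * P) r j)) := by
  have qstar := ppm_quad_const F hF hPstar
  constructor
  · intro h P hP
    have h1 := h P hP
    have q := ppm_quad_const F hF hP
    rw [qstar, q] at h1
    linarith
  · intro h P hP
    have h1 := h P hP
    have q := ppm_quad_const F hF hP
    rw [qstar, q]
    linarith
end

section
/- (Affine factorization rank bound.) Let K and n be positive integers, let M^k ∈ ℝ^{2 × 3} and t^k ∈ ℝ² for k = 1,…,K, and let X_1,…,X_n ∈ ℝ³. Define the matrix D' ∈ ℝ^{2K × n} whose k-th 2 × n block (rows 2k−1 and 2k) has i-th column equal to M^k X_i + t^k. Then rank(D') ≤ 4. -/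
open Matrix BigOperators

/-! In homogeneous coordinates `(X_i, 1)` each projected point is `[M^k | t^k] (X_i, 1)`, so `D'`
factors through `ℝ⁴` as the stacked `2K × 4` matrix of the `[M^k | t^k]` times the `4 × n` matrix
of the homogeneous points. -/

namespace Matrix

variable {R ι m κ : Type*} [CommRing R] [StrongRankCondition R] [Fintype m] [Fintype κ]

theorem rank_mul_add_vecMulVec_le (A : Matrix ι m R) (B : Matrix m κ R) (b : ι → R)
    (c : κ → R) : (A * B + vecMulVec b c).rank ≤ Fintype.card m + 1 := by
  rw [vecMulVec_eq Unit, ← fromCols_mul_fromRows]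
  calc _ ≤ (fromCols A (replicateCol Unit b)).rank := rank_mul_le_left _ _
    _ ≤ Fintype.card (m ⊕ Unit) := rank_le_card_width _
    _ = Fintype.card m + 1 := by simp

end Matrix

theorem affine_factorization_rank_le_four_general (K n : ℕ)
    (M : Fin K → Matrix (Fin 2) (Fin 3) ℝ) (t : Fin K → Fin 2 → ℝ)
    (X : Fin n → Fin 3 → ℝ)
    (D : Matrix (Fin K × Fin 2) (Fin n) ℝ)
    (hD : ∀ (k : Fin K) (r : Fin 2) (i : Fin n),
      D (k, r) i = (M k *ᵥ X i + t k) r) :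
    D.rank ≤ 4 := by
  have hfactor : D = of (fun p : Fin K × Fin 2 => M p.1 p.2) * of (fun j i => X i j)
      + vecMulVec (fun p : Fin K × Fin 2 => t p.1 p.2) (fun _ => 1) := by
    ext ⟨k, r⟩ i
    simp [hD, mulVec, dotProduct, mul_apply, vecMulVec_apply]
  rw [hfactor]
  exact rank_mul_add_vecMulVec_le _ _ _ _

/-- Affine factorization rank bound: the measurement matrix stacking the image
coordinates `M^k X_i + t^k` of `n` points over `K` images has rank at most 4. -/
theorem affine_factorization_rank_le_four (K n : ℕ) (hK : 0 < K) (hn : 0 < n)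
    (M : Fin K → Matrix (Fin 2) (Fin 3) ℝ) (t : Fin K → Fin 2 → ℝ)
    (X : Fin n → Fin 3 → ℝ)
    (D : Matrix (Fin K × Fin 2) (Fin n) ℝ)
    (hD : ∀ (k : Fin K) (r : Fin 2) (i : Fin n),
      D (k, r) i = (M k *ᵥ X i + t k) r) :
    D.rank ≤ 4 :=
  affine_factorization_rank_le_four_general K n M t X D hD
end
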